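/- Let G be a simple connected graph with n nodes and m edges. The Kirchhoff index of the q-subdivision graph satisfies K(S_q(G)) = (2/q) K(G) + K̄(G) + (q/2) K̃(G) + (m²q² - n(n-1))/2. -/

import Mathlib

open Finset

variable {V : Type*}

/-- Normalized adjacency matrix `P = D^{-1/2} A D^{-1/2}`. -/
noncomputable def normAdj [Fintype V] (G : SimpleGraph V) [DecidableRel G.Adj] :
    Matrix V V ℝ :=
  Matrix.of fun i j =>
    if G.Adj i j then 1 / Real.sqrt ((G.degree i : ℝ) * (G.degree j : ℝ)) else 0

lemma normAdj_isHermitian [Fintype V] (G : SimpleGraph V) [DecidableRel G.Adj] :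
    (normAdj G).IsHermitian := by
  ext i j
  simp only [Matrix.conjTranspose_apply, normAdj, Matrix.of_apply, star_trivial]
  by_cases h : G.Adj i j
  · rw [if_pos h, if_pos ((G.adj_comm i j).mp h), mul_comm]
  · rw [if_neg h, if_neg (fun h' => h ((G.adj_comm j i).mp h'))]

/-- `μ` is an eigenvalue of `M`. -/
def IsEigenvalue {W : Type*} [Fintype W] (M : Matrix W W ℝ) (μ : ℝ) : Prop :=
  ∃ v : W → ℝ, v ≠ 0 ∧ M.mulVec v = μ • v

/-- Multiplicity of `μ` as an eigenvalue of `M` (dimension of the eigenspace). -/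
noncomputable def eigMult {W : Type*} [Fintype W] [DecidableEq W]
    (M : Matrix W W ℝ) (μ : ℝ) : ℕ :=
  Module.finrank ℝ (LinearMap.ker (Matrix.toLin' (M - μ • (1 : Matrix W W ℝ))))

/-- `r` is the effective-resistance function of `G`: `r i j = φ i - φ j` where
`L φ = e_i - e_j`. -/
def IsEffRes [Fintype V] [DecidableEq V] (G : SimpleGraph V) [DecidableRel G.Adj]
    (r : V → V → ℝ) : Prop :=
  ∀ i j : V, ∃ φ : V → ℝ,
    (G.lapMatrix ℝ).mulVec φ =
      (fun k => (if k = i then (1 : ℝ) else 0) - (if k = j then (1 : ℝ) else 0)) ∧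
    r i j = φ i - φ j

/-- `T` is the expected-hitting-time function of the simple random walk on `G`. -/
def IsHitting [Fintype V] (G : SimpleGraph V) [DecidableRel G.Adj] (T : V → V → ℝ) : Prop :=
  (∀ j, T j j = 0) ∧
  ∀ i j : V, i ≠ j → T i j = 1 + (∑ k ∈ G.neighborFinset i, T k j) / (G.degree i : ℝ)

/-- Kemeny constant `∑_{λ eigenvalue ≠ 1} 1/(1-λ)` of the random walk on `G`. -/
noncomputable def kemeny [Fintype V] [DecidableEq V] (G : SimpleGraph V) [DecidableRel G.Adj]
    (hP : (normAdj G).IsHermitian) : ℝ :=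
  ∑ i, if hP.eigenvalues i = 1 then 0 else 1 / (1 - hP.eigenvalues i)

/-- Kirchhoff index. -/
noncomputable def kirchhoff [Fintype V] (r : V → V → ℝ) : ℝ :=
  (∑ i, ∑ j, r i j) / 2

/-- Additive degree-Kirchhoff index. -/
noncomputable def addKirchhoff [Fintype V] (G : SimpleGraph V) [DecidableRel G.Adj]
    (r : V → V → ℝ) : ℝ :=
  (∑ i, ∑ j, ((G.degree i : ℝ) + (G.degree j : ℝ)) * r i j) / 2

/-- Multiplicative degree-Kirchhoff index. -/
noncomputable def mulKirchhoff [Fintype V] (G : SimpleGraph V) [DecidableRel G.Adj]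
    (r : V → V → ℝ) : ℝ :=
  (∑ i, ∑ j, (G.degree i : ℝ) * (G.degree j : ℝ) * r i j) / 2

/-- The adjacency relation of the q-subdivision graph. -/
def qSubAdj (G : SimpleGraph V) (q : ℕ) :
    (V ⊕ (G.edgeSet × Fin q)) → (V ⊕ (G.edgeSet × Fin q)) → Prop
  | Sum.inl u, Sum.inr p => u ∈ (p.1 : Sym2 V)
  | Sum.inr p, Sum.inl u => u ∈ (p.1 : Sym2 V)
  | _, _ => False

/-- The q-subdivision graph `S_q(G)`: every edge `uv` of `G` is replaced by `q`
disjoint paths of length 2. -/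
def qSubdivision (G : SimpleGraph V) (q : ℕ) :
    SimpleGraph (V ⊕ (G.edgeSet × Fin q)) where
  Adj := qSubAdj G q
  symm := by
    constructor
    intro a b h
    cases a <;> cases b <;> simp_all [qSubAdj]
  loopless := by
    constructor
    intro a h
    cases a <;> simp_all [qSubAdj]

noncomputable instance (G : SimpleGraph V) (q : ℕ) :
    DecidableRel (qSubdivision G q).Adj := Classical.decRel _

noncomputable instance [Fintype V] (G : SimpleGraph V) : Fintype G.edgeSet :=
  Fintype.ofFinite _

/-!
A potential `x` on `G`, extended to `S_q(G)` by `z ↦ endpointWeight G q z ⬝ᵥ x` (the average of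
the two endpoint values at a subdivision vertex), has Laplacian `(q/2) L x` on `V` and `0` on the
new vertices; and unit current injected at a new vertex `z` equals current `endpointWeight G q z`
injected on `V`, up to the Laplacian of `½ δ_z`. With the identity `cᵀ x = -½ bᵀ R c` for
`L x = b` and `∑ b = ∑ c = 0`, this gives for `z ≠ z'`, writing `β = endpointWeight G q`,
`r'(z, z') = midpointHalf z + midpointHalf z' - (β z - β z')ᵀ R (β z - β z') / q`.
Summed over all pairs, the cross terms become `sᵀ R s` with `s = ∑ β z = 1 + (q/2) d`, which
produces the three Kirchhoff indices, and the diagonal terms `∑ (β z)ᵀ R β z` are evaluated by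
Foster's theorem `∑_{ij ∈ E} r_ij = n - 1`.
-/

open Matrix SimpleGraph

lemma sum_sum_sub_dotProduct_mulVec_sub {Z W R : Type*} [Fintype Z] [Fintype W] [CommRing R]
    (A : Matrix W W R) (f : Z → W → R) :
    ∑ z, ∑ z', (f z - f z') ⬝ᵥ (A *ᵥ (f z - f z')) =
      2 * Fintype.card Z * ∑ z, f z ⬝ᵥ (A *ᵥ f z) - 2 * (∑ z, f z) ⬝ᵥ (A *ᵥ ∑ z, f z) := by
  have hcross : ∑ z, ∑ z', f z' ⬝ᵥ (A *ᵥ f z) = (∑ z, f z) ⬝ᵥ (A *ᵥ ∑ z, f z) := by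
    simp only [mulVec_sum, dotProduct_sum, sum_dotProduct]
  have hcross' : ∑ z, ∑ z', f z ⬝ᵥ (A *ᵥ f z') = (∑ z, f z) ⬝ᵥ (A *ᵥ ∑ z, f z) := by
    rw [sum_comm, hcross]
  simp only [mulVec_sub, dotProduct_sub, sub_dotProduct, sum_sub_distrib, hcross, hcross',
    sum_const, card_univ, nsmul_eq_mul, ← mul_sum]
  ring

lemma sum_sum_ite_eq_zero_add {Z R : Type*} [Fintype Z] [DecidableEq Z] [CommRing R]
    (f : Z → R) :
    ∑ z, ∑ z', (if z = z' then 0 else f z + f z') = 2 * (Fintype.card Z - 1) * ∑ z, f z := by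
  have h : ∀ z z', (if z = z' then 0 else f z + f z') =
      f z + f z' - if z = z' then f z + f z' else 0 := fun z z' => by split_ifs <;> simp
  simp only [h, sum_sub_distrib, sum_add_distrib, sum_ite_eq, mem_univ, if_true, sum_const,
    card_univ, nsmul_eq_mul, ← mul_sum]
  ring

lemma mulVec_sum_smul_eq_of_sum_eq_zero {W : Type*} [Fintype W] [DecidableEq W]
    {M : Matrix W W ℝ} {g : W → W → ℝ} {v₀ : W}
    (hg : ∀ a, M *ᵥ g a = Pi.single a 1 - Pi.single v₀ 1) {b : W → ℝ} (hb : ∑ i, b i = 0) :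
    M *ᵥ ∑ a, b a • g a = b := by
  ext k
  simp [mulVec_sum, mulVec_smul, hg, Finset.sum_apply, Pi.single_apply, mul_sub, sum_sub_distrib,
    hb]

lemma dotProduct_mulVec_one_add_mul_degree [Fintype V] (G : SimpleGraph V) [DecidableRel G.Adj]
    (a : ℝ) (r : V → V → ℝ) :
    (fun i => 1 + a * G.degree i) ⬝ᵥ (of r *ᵥ fun i => 1 + a * G.degree i) =
      2 * kirchhoff r + 2 * a * addKirchhoff G r + 2 * a ^ 2 * mulKirchhoff G r := by
  have h : ∀ i j, (1 + a * G.degree i) * (r i j * (1 + a * G.degree j)) =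
      r i j + a * ((G.degree i + G.degree j) * r i j) + a ^ 2 * (G.degree i * G.degree j * r i j) :=
    fun i j => by ring
  simp only [kirchhoff, addKirchhoff, mulKirchhoff, dotProduct, mulVec, of_apply, mul_sum]
  simp only [h, sum_add_distrib, ← mul_sum]
  ring

section EffectiveResistance

variable {W : Type*} [Fintype W] [DecidableEq W] (H : SimpleGraph W) [DecidableRel H.Adj]

lemma SimpleGraph.lapMatrix_mulVec_apply_eq_sum (x : W → ℝ) (i : W) :
    (H.lapMatrix ℝ *ᵥ x) i = ∑ j, if H.Adj i j then x i - x j else 0 := by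
  rw [lapMatrix_mulVec_apply, ← sum_filter, sum_sub_distrib, sum_const, ← neighborFinset_eq_filter,
    card_neighborFinset_eq_degree, nsmul_eq_mul]

lemma SimpleGraph.lapMatrix_mulVec_dotProduct (x y : W → ℝ) :
    (H.lapMatrix ℝ *ᵥ x) ⬝ᵥ y = x ⬝ᵥ (H.lapMatrix ℝ *ᵥ y) := by
  rw [dotProduct_mulVec, ← vecMul_transpose, (H.isSymm_lapMatrix (R := ℝ)).eq]

variable {H} {r : W → W → ℝ}

lemma IsEffRes.apply_self (hr : IsEffRes H r) (i : W) : r i i = 0 := by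
  obtain ⟨φ, -, h⟩ := hr i i
  rw [h, sub_self]

lemma IsEffRes.apply_eq_sub (hconn : H.Connected) (hr : IsEffRes H r) {i j : W} {φ : W → ℝ}
    (hφ : H.lapMatrix ℝ *ᵥ φ = Pi.single i 1 - Pi.single j 1) : r i j = φ i - φ j := by
  obtain ⟨ψ, hψ, h⟩ := hr i j
  have hker : H.lapMatrix ℝ *ᵥ (φ - ψ) = 0 := by
    rw [mulVec_sub, hφ, hψ]
    ext k
    simp [Pi.single_apply]
  have := (H.lapMatrix_mulVec_eq_zero_iff_forall_reachable).mp hker i j (hconn.preconnected i j)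
  simp only [Pi.sub_apply] at this
  linarith

/-- `g a` is the potential of unit current from `a` to a ground `v₀`, normalized to vanish at `v₀`;
reciprocity makes it symmetric. -/
lemma IsEffRes.exists_green (hconn : H.Connected) (hr : IsEffRes H r) :
    ∃ (g : W → W → ℝ) (v₀ : W), (∀ a, H.lapMatrix ℝ *ᵥ g a = Pi.single a 1 - Pi.single v₀ 1) ∧
      (∀ a b, g a b = g b a) ∧ ∀ a b, r a b = g a a + g b b - 2 * g a b := by
  obtain ⟨v₀⟩ := hconn.nonempty
  choose ψ hψ _ using fun a => hr a v₀
  set g : W → W → ℝ := fun a => ψ a - ψ a v₀ • fun _ => 1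
  have hLg : ∀ a, H.lapMatrix ℝ *ᵥ g a = Pi.single a 1 - Pi.single v₀ 1 := by
    intro a
    rw [mulVec_sub, mulVec_smul, lapMatrix_mulVec_const_eq_zero, smul_zero, sub_zero, hψ]
    ext k
    simp [Pi.single_apply]
  have hgv₀ : ∀ a, g a v₀ = 0 := by simp [g]
  have hsymm : ∀ a b, g a b = g b a := by
    intro a b
    have := H.lapMatrix_mulVec_dotProduct (g b) (g a)
    simp only [hLg, sub_dotProduct, dotProduct_sub, single_dotProduct, dotProduct_single,
      hgv₀] at this
    linarith
  refine ⟨g, v₀, hLg, hsymm, fun a b => ?_⟩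
  rw [hr.apply_eq_sub hconn (φ := g a - g b) (by rw [mulVec_sub, hLg, hLg]; abel)]
  simp only [Pi.sub_apply, hsymm b a]
  ring

lemma IsEffRes.exists_lapMatrix_mulVec_eq (hconn : H.Connected) (hr : IsEffRes H r)
    {b : W → ℝ} (hb : ∑ i, b i = 0) : ∃ x, H.lapMatrix ℝ *ᵥ x = b := by
  obtain ⟨g, v₀, hLg, -, -⟩ := hr.exists_green hconn
  exact ⟨_, mulVec_sum_smul_eq_of_sum_eq_zero hLg hb⟩

lemma IsEffRes.dotProduct_eq_of_lapMatrix_mulVec_eq (hconn : H.Connected) (hr : IsEffRes H r)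
    {x b c : W → ℝ} (hx : H.lapMatrix ℝ *ᵥ x = b) (hb : ∑ i, b i = 0) (hc : ∑ i, c i = 0) :
    c ⬝ᵥ x = -(b ⬝ᵥ (of r *ᵥ c)) / 2 := by
  obtain ⟨g, v₀, hLg, hsymm, hrg⟩ := hr.exists_green hconn
  set y := ∑ a, b a • g a
  have hxy : x = y + (x v₀ - y v₀) • fun _ => 1 := by
    have hker : H.lapMatrix ℝ *ᵥ (x - y) = 0 := by
      rw [mulVec_sub, hx, mulVec_sum_smul_eq_of_sum_eq_zero hLg hb, sub_self]
    ext k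
    have := (H.lapMatrix_mulVec_eq_zero_iff_forall_reachable).mp hker k v₀
      (hconn.preconnected k v₀)
    simp only [Pi.sub_apply] at this
    simp only [Pi.add_apply, Pi.smul_apply, smul_eq_mul, mul_one]
    linarith
  have hcx : c ⬝ᵥ x = ∑ a, ∑ k, b a * g a k * c k := by
    rw [hxy, dotProduct_add, dotProduct_smul]
    simp only [dotProduct, mul_one, hc, mul_zero, add_zero, y, Finset.sum_apply, Pi.smul_apply,
      smul_eq_mul, mul_sum]
    rw [sum_comm]
    exact sum_congr rfl fun a _ => sum_congr rfl fun k _ => by ring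
  have hbc : b ⬝ᵥ (of r *ᵥ c) = ∑ a, ∑ k, (b a * g a a * c k + b a * (g k k * c k)
      - 2 * (b a * g a k * c k)) := by
    simp only [dotProduct, mulVec, of_apply, hrg, mul_sum]
    exact sum_congr rfl fun a _ => sum_congr rfl fun k _ => by ring
  simp only [sum_add_distrib, sum_sub_distrib, ← mul_sum, ← sum_mul, hb, hc] at hbc
  rw [hcx, hbc]
  ring

/-- Foster's theorem. -/
lemma IsEffRes.sum_sum_ite_adj (hconn : H.Connected) (hr : IsEffRes H r) :
    ∑ i, ∑ j, (if H.Adj i j then r i j else 0) = 2 * (Fintype.card W - 1) := by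
  obtain ⟨g, v₀, hLg, hsymm, hrg⟩ := hr.exists_green hconn
  have hrow : ∀ i, ∑ j, (if H.Adj i j then g i i - g i j else 0) = 1 - if i = v₀ then 1 else 0 := by
    intro i
    rw [← H.lapMatrix_mulVec_apply_eq_sum, hLg]
    simp [Pi.single_apply]
  have hswap : ∑ i, ∑ j, (if H.Adj i j then g j j - g i j else 0) =
      ∑ i, ∑ j, (if H.Adj i j then g i i - g i j else 0) := by
    rw [sum_comm]
    exact sum_congr rfl fun i _ => sum_congr rfl fun j _ => by simp only [H.adj_comm j i, hsymm j i]
  calc ∑ i, ∑ j, (if H.Adj i j then r i j else 0)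
      = ∑ i, ∑ j, ((if H.Adj i j then g i i - g i j else 0) +
          (if H.Adj i j then g j j - g i j else 0)) :=
        sum_congr rfl fun i _ => sum_congr rfl fun j _ => by
          split_ifs
          · rw [hrg]; ring
          · rw [add_zero]
    _ = 2 * (Fintype.card W - 1) := by
        simp only [sum_add_distrib, hswap, hrow, sum_sub_distrib, sum_ite_eq', mem_univ, if_true,
          sum_const, card_univ, nsmul_eq_mul, mul_one]
        ring

end EffectiveResistance

section Subdivision

variable (G : SimpleGraph V) (q : ℕ)

lemma not_qSubdivision_adj_inl_inl (u v : V) : ¬(qSubdivision G q).Adj (Sum.inl u) (Sum.inl v) :=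
  id

lemma not_qSubdivision_adj_inr_inr (p p' : G.edgeSet × Fin q) :
    ¬(qSubdivision G q).Adj (Sum.inr p) (Sum.inr p') :=
  id

lemma qSubdivision_connected (hconn : G.Connected) (hq : 0 < q) :
    (qSubdivision G q).Connected := by
  have hbase : ∀ u v, (qSubdivision G q).Reachable (Sum.inl u) (Sum.inl v) := by
    intro u v
    obtain ⟨w⟩ := hconn.preconnected u v
    induction w with
    | nil => rfl
    | @cons a b _ hab _ ih =>
      let p : G.edgeSet × Fin q := (⟨s(a, b), hab⟩, ⟨0, hq⟩)
      have ha : (qSubdivision G q).Adj (Sum.inl a) (Sum.inr p) := Sym2.mem_mk_left a b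
      have hb : (qSubdivision G q).Adj (Sum.inr p) (Sum.inl b) := Sym2.mem_mk_right a b
      exact ha.reachable.trans (hb.reachable.trans ih)
  have hvertex : ∀ z, ∃ u, (qSubdivision G q).Reachable z (Sum.inl u)
    | Sum.inl u => ⟨u, .rfl⟩
    | Sum.inr p => ⟨_, Adj.reachable (show (qSubdivision G q).Adj (Sum.inr p) (Sum.inl _) from
        Sym2.out_fst_mem (p.1 : Sym2 V))⟩
  have := hconn.nonempty
  refine ⟨fun z z' => ?_⟩
  obtain ⟨u, hu⟩ := hvertex z
  obtain ⟨u', hu'⟩ := hvertex z'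
  exact hu.trans ((hbase u u').trans hu'.symm)

noncomputable def midpointHalf : V ⊕ (G.edgeSet × Fin q) → ℝ :=
  Sum.elim 0 fun _ => 2⁻¹

lemma sum_midpointHalf [Fintype V] :
    ∑ z, midpointHalf G q z = Fintype.card G.edgeSet * q / 2 := by
  simp only [midpointHalf, Fintype.sum_sum_type, Sum.elim_inl, Sum.elim_inr, Pi.zero_apply,
    sum_const_zero, zero_add, sum_const, card_univ, Fintype.card_prod, Fintype.card_fin,
    nsmul_eq_mul, Nat.cast_mul]
  ring

variable [DecidableEq V] [DecidableRel G.Adj]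

lemma incMatrix_apply_edgeSet (k : V) (e : G.edgeSet) :
    G.incMatrix ℝ k e = if k ∈ (e : Sym2 V) then 1 else 0 := by
  simp [incMatrix_apply', incidenceSet, e.2]

lemma ite_qSubdivision_adj_inl_inr (k : V) (p : G.edgeSet × Fin q) (a : ℝ) :
    (if (qSubdivision G q).Adj (Sum.inl k) (Sum.inr p) then a else 0) =
      G.incMatrix ℝ k p.1 * a := by
  rw [incMatrix_apply_edgeSet]
  by_cases h : k ∈ (p.1 : Sym2 V)
  · rw [if_pos h, if_pos (show (qSubdivision G q).Adj (Sum.inl k) (Sum.inr p) from h), one_mul]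
  · rw [if_neg h, if_neg (show ¬(qSubdivision G q).Adj (Sum.inl k) (Sum.inr p) from h), zero_mul]

noncomputable def endpointWeight : V ⊕ (G.edgeSet × Fin q) → V → ℝ :=
  Sum.elim (fun u => Pi.single u 1) fun p => (2⁻¹ : ℝ) • fun i => G.incMatrix ℝ i p.1

variable [Fintype V]

lemma sum_edgeSet_incMatrix_mul (k : V) (f : Sym2 V → ℝ) :
    ∑ e : G.edgeSet, G.incMatrix ℝ k e * f e = ∑ e, G.incMatrix ℝ k e * f e := by
  rw [← sum_subtype G.edgeFinset (fun e => mem_edgeFinset) fun e => G.incMatrix ℝ k e * f e]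
  refine sum_subset (subset_univ _) fun e _ he => ?_
  rw [G.incMatrix_of_notMem_incidenceSet fun h => he (mem_edgeFinset.mpr h.1), zero_mul]

lemma sum_edgeSet_incMatrix (k : V) : ∑ e : G.edgeSet, G.incMatrix ℝ k e = G.degree k := by
  simpa [sum_incMatrix_apply] using sum_edgeSet_incMatrix_mul G k 1

lemma sum_edgeSet_incMatrix_mul_incMatrix (i j : V) :
    ∑ e : G.edgeSet, G.incMatrix ℝ i e * G.incMatrix ℝ j e =
      if i = j then (G.degree i : ℝ) else if G.Adj i j then 1 else 0 := by
  rw [sum_edgeSet_incMatrix_mul, ← of_apply (f := fun i j =>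
    if i = j then (G.degree i : ℝ) else if G.Adj i j then 1 else 0), ← incMatrix_mul_transpose]
  rfl

lemma sum_incMatrix_apply_edgeSet (e : G.edgeSet) : ∑ i, G.incMatrix ℝ i e = 2 :=
  G.sum_incMatrix_apply_of_mem_edgeSet e.2

lemma lapMatrix_qSubdivision_mulVec_inl (y : V ⊕ (G.edgeSet × Fin q) → ℝ) (k : V) :
    ((qSubdivision G q).lapMatrix ℝ *ᵥ y) (Sum.inl k) =
      ∑ p, G.incMatrix ℝ k p.1 * (y (Sum.inl k) - y (Sum.inr p)) := by
  simp [lapMatrix_mulVec_apply_eq_sum, Fintype.sum_sum_type, not_qSubdivision_adj_inl_inl,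
    ite_qSubdivision_adj_inl_inr]

lemma lapMatrix_qSubdivision_mulVec_inr (y : V ⊕ (G.edgeSet × Fin q) → ℝ)
    (p : G.edgeSet × Fin q) :
    ((qSubdivision G q).lapMatrix ℝ *ᵥ y) (Sum.inr p) =
      ∑ k, G.incMatrix ℝ k p.1 * (y (Sum.inr p) - y (Sum.inl k)) := by
  simp [lapMatrix_mulVec_apply_eq_sum, Fintype.sum_sum_type, not_qSubdivision_adj_inr_inr,
    (qSubdivision G q).adj_comm (Sum.inr p), ite_qSubdivision_adj_inl_inr]

lemma sum_endpointWeight (z : V ⊕ (G.edgeSet × Fin q)) : ∑ i, endpointWeight G q z i = 1 := by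
  cases z with
  | inl u => simp [endpointWeight]
  | inr p => simp [endpointWeight, ← mul_sum, sum_incMatrix_apply_edgeSet]

lemma sum_endpointWeight_eq :
    ∑ z, endpointWeight G q z = fun i => 1 + (q / 2 : ℝ) * G.degree i := by
  ext i
  simp only [endpointWeight, Finset.sum_apply, Fintype.sum_sum_type, Sum.elim_inl, sum_pi_single,
    mem_univ, if_true, Sum.elim_inr, Pi.smul_apply, smul_eq_mul, Fintype.sum_prod_type, sum_const,
    card_univ, Fintype.card_fin, nsmul_eq_mul, ← sum_edgeSet_incMatrix, mul_sum, add_right_inj]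
  exact sum_congr rfl fun _ _ => by ring

lemma lapMatrix_qSubdivision_mulVec_lift (x : V → ℝ) :
    (qSubdivision G q).lapMatrix ℝ *ᵥ (fun z => endpointWeight G q z ⬝ᵥ x) =
      Sum.elim ((q / 2 : ℝ) • (G.lapMatrix ℝ *ᵥ x)) 0 := by
  ext (k | p)
  · have hedge : ∀ e : G.edgeSet, x k - 2⁻¹ * ∑ i, G.incMatrix ℝ i e * x i =
        2⁻¹ * ∑ i, G.incMatrix ℝ i e * (x k - x i) := fun e => by
      simp [mul_sub, sum_sub_distrib, ← sum_mul, sum_incMatrix_apply_edgeSet]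
    have hgram : ∀ i, (∑ e : G.edgeSet, G.incMatrix ℝ k e * G.incMatrix ℝ i e) * (x k - x i) =
        if G.Adj k i then x k - x i else 0 := fun i => by
      rw [sum_edgeSet_incMatrix_mul_incMatrix]
      split_ifs with h <;> simp [h]
    simp only [lapMatrix_qSubdivision_mulVec_inl, endpointWeight, Sum.elim_inl, Sum.elim_inr,
      single_dotProduct, one_mul, smul_dotProduct, smul_eq_mul, Fintype.sum_prod_type, sum_const,
      card_univ, Fintype.card_fin, nsmul_eq_mul]
    simp only [dotProduct, hedge]
    rw [Pi.smul_apply, lapMatrix_mulVec_apply_eq_sum, ← sum_congr rfl fun i _ => hgram i]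
    simp only [smul_eq_mul, sum_mul, mul_sum]
    rw [sum_comm]
    exact sum_congr rfl fun i _ => sum_congr rfl fun e _ => by ring
  · simp only [lapMatrix_qSubdivision_mulVec_inr, endpointWeight, Sum.elim_inl, Sum.elim_inr,
      single_dotProduct, one_mul, smul_dotProduct, smul_eq_mul, Pi.zero_apply, mul_sub,
      sum_sub_distrib, ← sum_mul, sum_incMatrix_apply_edgeSet]
    simp only [dotProduct]
    ring

lemma lapMatrix_qSubdivision_mulVec_midpointHalf (z : V ⊕ (G.edgeSet × Fin q)) :
    (qSubdivision G q).lapMatrix ℝ *ᵥ (midpointHalf G q z • Pi.single z 1) =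
      Pi.single z 1 - Sum.elim (endpointWeight G q z) 0 := by
  cases z with
  | inl u => ext (k | p) <;> simp [midpointHalf, endpointWeight, Pi.single_apply]
  | inr p =>
    ext (k | p')
    · simp [lapMatrix_qSubdivision_mulVec_inl, midpointHalf, endpointWeight, Pi.single_apply,
        mul_comm]
    · simp [lapMatrix_qSubdivision_mulVec_inr, midpointHalf, endpointWeight, Pi.single_apply,
        ← sum_mul, sum_incMatrix_apply_edgeSet]

variable {G q} {r : V → V → ℝ}

lemma IsEffRes.qSubdivision_apply {r' : V ⊕ (G.edgeSet × Fin q) → V ⊕ (G.edgeSet × Fin q) → ℝ}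
    (hconn : G.Connected) (hq : 0 < q) (hr : IsEffRes G r) (hr' : IsEffRes (qSubdivision G q) r')
    (z z' : V ⊕ (G.edgeSet × Fin q)) :
    r' z z' = (if z = z' then 0 else midpointHalf G q z + midpointHalf G q z') -
      (endpointWeight G q z - endpointWeight G q z') ⬝ᵥ
        (of r *ᵥ (endpointWeight G q z - endpointWeight G q z')) / q := by
  have hq₀ : (q : ℝ) ≠ 0 := by positivity
  set c := endpointWeight G q z - endpointWeight G q z'
  have hc : ∑ i, c i = 0 := by simp [c, sum_sub_distrib, sum_endpointWeight]
  obtain ⟨x, hx⟩ := hr.exists_lapMatrix_mulVec_eq hconn (b := (2 / q : ℝ) • c)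
    (by simp [← mul_sum, hc])
  have hΦ : (qSubdivision G q).lapMatrix ℝ *ᵥ (midpointHalf G q z • Pi.single z 1 -
      midpointHalf G q z' • Pi.single z' 1 + fun y => endpointWeight G q y ⬝ᵥ x) =
      Pi.single z 1 - Pi.single z' 1 := by
    rw [mulVec_add, mulVec_sub, lapMatrix_qSubdivision_mulVec_midpointHalf,
      lapMatrix_qSubdivision_mulVec_midpointHalf, lapMatrix_qSubdivision_mulVec_lift, hx]
    ext (k | p)
    · simp only [smul_smul, Pi.add_apply, Pi.sub_apply, Sum.elim_inl, Pi.smul_apply, smul_eq_mul,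
        c]
      field_simp
      ring
    · simp
  have hcx := hr.dotProduct_eq_of_lapMatrix_mulVec_eq hconn hx (by simp [← mul_sum, hc]) hc
  rw [smul_dotProduct, smul_eq_mul] at hcx
  rw [hr'.apply_eq_sub (qSubdivision_connected G q hconn hq) hΦ]
  have hcx' : endpointWeight G q z ⬝ᵥ x - endpointWeight G q z' ⬝ᵥ x = c ⬝ᵥ x :=
    (sub_dotProduct _ _ _).symm
  by_cases h : z = z'
  · subst h
    simp [c]
  · simp only [Pi.add_apply, Pi.sub_apply, Pi.smul_apply, smul_eq_mul, Pi.single_eq_same,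
      Pi.single_eq_of_ne h, Pi.single_eq_of_ne (Ne.symm h), if_neg h]
    field_simp at hcx ⊢
    linear_combination (q : ℝ) * hcx' + hcx

lemma IsEffRes.sum_edgeSet_incMatrix_dotProduct (hconn : G.Connected) (hr : IsEffRes G r) :
    ∑ e : G.edgeSet, (fun i => G.incMatrix ℝ i e) ⬝ᵥ (of r *ᵥ fun i => G.incMatrix ℝ i e) =
      2 * (Fintype.card V - 1) := by
  rw [← hr.sum_sum_ite_adj hconn]
  simp only [dotProduct, mulVec, of_apply, mul_sum, sum_comm (s := univ (α := G.edgeSet))]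
  refine sum_congr rfl fun i _ => sum_congr rfl fun j _ => ?_
  simp_rw [mul_left_comm (G.incMatrix ℝ i _) (r i j), ← mul_sum,
    sum_edgeSet_incMatrix_mul_incMatrix]
  split_ifs with h <;> simp_all [hr.apply_self]

lemma IsEffRes.sum_endpointWeight_dotProduct (hconn : G.Connected) (hr : IsEffRes G r) :
    ∑ z, endpointWeight G q z ⬝ᵥ (of r *ᵥ endpointWeight G q z) =
      q * (Fintype.card V - 1) / 2 := by
  simp only [endpointWeight, Fintype.sum_sum_type, Sum.elim_inl, mulVec_single, MulOpposite.op_one,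
    one_smul, single_dotProduct, col_apply, of_apply, hr.apply_self, mul_zero, sum_const_zero,
    Sum.elim_inr, mulVec_smul, dotProduct_smul, smul_dotProduct, smul_eq_mul,
    Fintype.sum_prod_type, sum_const, card_univ, Fintype.card_fin, nsmul_eq_mul, zero_add]
  simp only [← mul_sum, hr.sum_edgeSet_incMatrix_dotProduct hconn]
  ring

end Subdivision

/-- `K(S_q(G)) = (2/q) K(G) + K̄(G) + (q/2) K̃(G) + (m²q² - n(n-1))/2`. -/
theorem stmt18 [Fintype V] [DecidableEq V] (G : SimpleGraph V) [DecidableRel G.Adj]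
    (hconn : G.Connected) (q : ℕ) (hq : 0 < q)
    (r : V → V → ℝ) (r' : (V ⊕ (G.edgeSet × Fin q)) → (V ⊕ (G.edgeSet × Fin q)) → ℝ)
    (hr : IsEffRes G r) (hr' : IsEffRes (qSubdivision G q) r') :
    kirchhoff r' =
      2 / (q : ℝ) * kirchhoff r + addKirchhoff G r + (q : ℝ) / 2 * mulKirchhoff G r +
        ((G.edgeFinset.card : ℝ) ^ 2 * (q : ℝ) ^ 2 -
          (Fintype.card V : ℝ) * ((Fintype.card V : ℝ) - 1)) / 2 := by
  have hK : kirchhoff r' = (∑ z, ∑ z', (if z = z' then 0 else midpointHalf G q z +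
      midpointHalf G q z') - (∑ z, ∑ z', (endpointWeight G q z - endpointWeight G q z') ⬝ᵥ
        (of r *ᵥ (endpointWeight G q z - endpointWeight G q z'))) / q) / 2 := by
    simp only [kirchhoff, hr.qSubdivision_apply hconn hq hr', sum_sub_distrib, sum_div]
  have hq₀ : (q : ℝ) ≠ 0 := by positivity
  rw [hK, sum_sum_ite_eq_zero_add, sum_midpointHalf, sum_sum_sub_dotProduct_mulVec_sub,
    sum_endpointWeight_eq, dotProduct_mulVec_one_add_mul_degree,
    hr.sum_endpointWeight_dotProduct hconn, Fintype.card_sum, Fintype.card_prod, Fintype.card_fin,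
    edgeFinset_card]
  push_cast
  field_simp
  ring
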